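/- Fix an integer s ≥ 2 and p ∈ (0,1). Let X_1, X_2, … be an i.i.d. sequence of random variables with the Log-Logistic(α;0,1) distribution, α > 0, and for each i ∈ ℕ let Q_{i,s}^{LL} = (1/2)·log(X_{(is, i(s+1)−1)}/X_{(i, i(s+1)−1)})/(H_{is−1} − H_{i−1}) be computed from the first n = i(s+1)−1 observations, and set F̂_{i,s,LL}^←(p) = (p/(1−p))^{Q_{i,s}^{LL}}. Then F̂_{i,s,LL}^←(p) converges almost surely, as i → ∞, to the theoretical quantile F_X^←(p) = (p/(1−p))^{1/α}. -/

import Mathlib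

/-!
The order statistics `X_(is)` and `X_(i)` of a sample of size `i(s+1) - 1` are sample quantiles
at levels tending to `s/(s+1)` and `1/(s+1)`. The strong law of large numbers, applied to the
indicators of `{X_j ≤ t}` for all rational `t` at once, makes the empirical distribution function
converge almost surely on `ℚ`; as the Log-Logistic distribution function is strictly increasing
on `(0, ∞)`, the two order statistics then converge to the quantiles `s^{1/α}` and `s^{-1/α}`.
So half their log-ratio tends to `log s / α`, while `H_{is-1} - H_{i-1} → log s` because
`H_n - log n` converges. Hence `Q_{i,s}^{LL} → 1/α`, and `y ↦ (p/(1-p))^y` is continuous.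
-/

open MeasureTheory ProbabilityTheory Real Filter

/-- The `k`-th order statistic (1-based indexing) of the sample `x : Fin n → ℝ`. -/
noncomputable def orderStat (n : ℕ) (x : Fin n → ℝ) (k : ℕ) : ℝ :=
  (Multiset.sort ((List.ofFn x : List ℝ) : Multiset ℝ) (· ≤ ·)).getD (k - 1) 0

/-- The cumulative distribution function of the Log-Logistic(α; 0, 1) distribution. -/
noncomputable def logLogisticCDF (α : ℝ) (x : ℝ) : ℝ :=
  if 0 < x then 1 / (1 + x ^ (-α)) else 0

open Finset Topology

theorem List.Pairwise.getElem_le_iff_lt_countP {α : Type*} [LinearOrder α] {l : List α}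
    (hl : l.Pairwise (· ≤ ·)) {k : ℕ} (hk : k < l.length) (t : α) :
    l[k] ≤ t ↔ k < l.countP (· ≤ t) := by
  induction l generalizing k with
  | nil => simp at hk
  | cons a l ih =>
    obtain ⟨ha, hl⟩ := List.pairwise_cons.1 hl
    by_cases hat : a ≤ t
    · rw [List.countP_cons_of_pos (by simpa using hat)]
      cases k with
      | zero => simpa using hat
      | succ k => simpa using ih hl (by simpa using hk)
    · have hgt : ∀ b ∈ a :: l, t < b := by
        simp only [List.mem_cons, forall_eq_or_imp]
        exact ⟨not_le.1 hat, fun b hb => (not_le.1 hat).trans_le (ha b hb)⟩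
      rw [List.countP_eq_zero.2 fun b hb => by simpa using hgt b hb]
      simpa using hgt _ (List.getElem_mem hk)

theorem orderStat_le_iff {n : ℕ} (x : Fin n → ℝ) {k : ℕ} (hk : 1 ≤ k) (hkn : k ≤ n) (t : ℝ) :
    orderStat n x k ≤ t ↔ k ≤ (List.ofFn x).countP (· ≤ t) := by
  have hperm : (Multiset.sort (List.ofFn x : Multiset ℝ) (· ≤ ·)).Perm (List.ofFn x) :=
    Multiset.coe_eq_coe.mp (Multiset.sort_eq _ _)
  have hlen : k - 1 < (Multiset.sort (List.ofFn x : Multiset ℝ) (· ≤ ·)).length := by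
    rw [hperm.length_eq, List.length_ofFn]; omega
  rw [orderStat, List.getD_eq_getElem _ _ hlen,
    (Multiset.pairwise_sort _ _).getElem_le_iff_lt_countP, hperm.countP_eq]
  omega

theorem List.countP_ofFn_natCast {α : Type*} (n : ℕ) (x : ℕ → α) (p : α → Prop)
    [DecidablePred p] : (List.ofFn fun j : Fin n => x j).countP (p ·) =
      #{j ∈ Finset.range n | p (x j)} := by
  have hmap : List.ofFn (fun j : Fin n => x j) = (List.range n).map x := by
    apply List.ext_getElem <;> simp
  rw [hmap, List.countP_map, Finset.card_def, Finset.filter_val,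
    ← Multiset.countP_eq_card_filter, Finset.range_val, Multiset.range, Multiset.coe_countP]
  rfl

theorem orderStat_natCast_le_iff {n : ℕ} (x : ℕ → ℝ) {k : ℕ} (hk : 1 ≤ k) (hkn : k ≤ n)
    (t : ℝ) : orderStat n (fun j => x j) k ≤ t ↔ k ≤ #{j ∈ range n | x j ≤ t} := by
  rw [orderStat_le_iff _ hk hkn, List.countP_ofFn_natCast]

theorem ae_tendsto_card_filter_le_div {Ω : Type*} [MeasurableSpace Ω] {μ : Measure Ω}
    [IsFiniteMeasure μ] {X : ℕ → Ω → ℝ} (hX : Measurable (X 0))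
    (hindep : Pairwise fun i j => X i ⟂ᵢ[μ] X j) (hident : ∀ i, IdentDistrib (X i) (X 0) μ μ) :
    ∀ᵐ ω ∂μ, ∀ t : ℚ, Tendsto (fun m : ℕ => (#{j ∈ range m | X j ω ≤ t} : ℝ) / m) atTop
      (𝓝 (μ.real {ω | X 0 ω ≤ t})) := by
  rw [ae_all_iff]
  intro t
  set f : ℝ → ℝ := (Set.Iic (t : ℝ)).indicator 1
  have hf : Measurable f := measurable_const.indicator measurableSet_Iic
  have hset : MeasurableSet {ω | X 0 ω ≤ t} := hX measurableSet_Iic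
  have hf0 : f ∘ X 0 = {ω | X 0 ω ≤ t}.indicator 1 := by
    ext ω
    exact (Set.indicator_comp_right (X 0) (g := 1)).symm
  have hlaw := strong_law_ae_real (fun j => f ∘ X j)
    (by rw [hf0]; exact (integrable_const 1).indicator hset)
    (fun i j hij => (hindep hij).comp hf hf) (fun i => (hident i).comp hf)
  rw [hf0, integral_indicator_one hset] at hlaw
  filter_upwards [hlaw] with ω hω
  simpa [f, Set.indicator_apply, Finset.sum_boole] using hω

theorem identDistrib_of_measure_le_eq {Ω : Type*} [MeasurableSpace Ω] {μ : Measure Ω}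
    [IsFiniteMeasure μ] {Y Z : Ω → ℝ} (hY : Measurable Y) (hZ : Measurable Z)
    (h : ∀ x, μ {ω | Y ω ≤ x} = μ {ω | Z ω ≤ x}) : IdentDistrib Y Z μ μ where
  aemeasurable_fst := hY.aemeasurable
  aemeasurable_snd := hZ.aemeasurable
  map_eq := Measure.ext_of_Iic _ _ fun x => by
    rw [Measure.map_apply hY measurableSet_Iic, Measure.map_apply hZ measurableSet_Iic]
    exact h x

theorem eventually_lt_of_tendsto_natCast_div {ι : Type*} {l : Filter ι} {a b n : ι → ℕ}
    {A B : ℝ} (ha : Tendsto (fun i => (a i : ℝ) / n i) l (𝓝 A))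
    (hb : Tendsto (fun i => (b i : ℝ) / n i) l (𝓝 B)) (hAB : A < B) :
    ∀ᶠ i in l, a i < b i := by
  filter_upwards [ha.eventually_lt hb hAB] with i hi
  by_contra! h
  exact hi.not_ge (div_le_div_of_nonneg_right (by exact_mod_cast h) (Nat.cast_nonneg _))

theorem tendsto_orderStat_of_tendsto_empirical {F : ℝ → ℝ} {x : ℕ → ℝ} {q ξ : ℝ}
    (hlt : ∀ t < ξ, F t < q) (hgt : ∀ t, ξ < t → q < F t) {k n : ℕ → ℕ}
    (hk : ∀ᶠ i in atTop, 1 ≤ k i ∧ k i ≤ n i) (hn : Tendsto n atTop atTop)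
    (hkn : Tendsto (fun i => (k i : ℝ) / n i) atTop (𝓝 q))
    (hemp : ∀ t : ℚ, Tendsto (fun m : ℕ => (#{j ∈ range m | x j ≤ t} : ℝ) / m) atTop
      (𝓝 (F t))) :
    Tendsto (fun i => orderStat (n i) (fun j => x j) (k i)) atTop (𝓝 ξ) := by
  refine tendsto_order.2 ⟨fun b hb => ?_, fun b hb => ?_⟩
  · obtain ⟨t, hbt, htξ⟩ := exists_rat_btwn hb
    filter_upwards [hk, eventually_lt_of_tendsto_natCast_div ((hemp t).comp hn) hkn (hlt t htξ)]
      with i ⟨hk_pos, hk_le⟩ hcount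
    exact hbt.trans <| not_le.1 fun h =>
      hcount.not_ge ((orderStat_natCast_le_iff x hk_pos hk_le t).1 h)
  · obtain ⟨t, hξt, htb⟩ := exists_rat_btwn hb
    filter_upwards [hk, eventually_lt_of_tendsto_natCast_div hkn ((hemp t).comp hn) (hgt t hξt)]
      with i ⟨hk_pos, hk_le⟩ hcount
    exact ((orderStat_natCast_le_iff x hk_pos hk_le t).2 hcount.le).trans_lt htb

theorem tendsto_natCast_mul_sub_div_self {a : ℕ} (ha : 0 < a) (c : ℕ) :
    Tendsto (fun i : ℕ => ((i * a - c : ℕ) : ℝ) / i) atTop (𝓝 a) := by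
  have hlim : Tendsto (fun i : ℕ => (a : ℝ) - c / i) atTop (𝓝 a) := by
    simpa using tendsto_const_nhds.sub (tendsto_const_div_atTop_nhds_zero_nat (c : ℝ))
  refine hlim.congr' ?_
  filter_upwards [eventually_ge_atTop (max c 1)] with i hi
  have hci : c ≤ i * a := (le_of_max_le_left hi).trans (Nat.le_mul_of_pos_right i ha)
  have hi0 : (i : ℝ) ≠ 0 := by positivity [(le_of_max_le_right hi)]
  rw [Nat.cast_sub hci]
  push_cast
  field_simp

theorem tendsto_natCast_mul_sub_div_mul_sub {a b : ℕ} (ha : 0 < a) (hb : 0 < b) (c d : ℕ) :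
    Tendsto (fun i : ℕ => ((i * a - c : ℕ) : ℝ) / (i * b - d : ℕ)) atTop (𝓝 (a / b)) := by
  refine ((tendsto_natCast_mul_sub_div_self ha c).div (tendsto_natCast_mul_sub_div_self hb d)
    (by positivity)).congr' ?_
  filter_upwards [eventually_ne_atTop 0] with i hi
  exact div_div_div_cancel_right₀ (Nat.cast_ne_zero.2 hi) _ _

theorem tendsto_mul_sub_atTop_nat {a : ℕ} (ha : 0 < a) (c : ℕ) :
    Tendsto (fun i : ℕ => i * a - c) atTop atTop :=
  tendsto_atTop_mono (fun i => Nat.sub_le_sub_right (Nat.le_mul_of_pos_right i ha) c)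
    (tendsto_sub_atTop_nat c)

theorem tendsto_harmonic_sub_harmonic {ι : Type*} {l : Filter ι} {f g : ι → ℕ}
    (hf : Tendsto f l atTop) (hg : Tendsto g l atTop) {c : ℝ} (hc : 0 < c)
    (hfg : Tendsto (fun i => (f i : ℝ) / g i) l (𝓝 c)) :
    Tendsto (fun i => (harmonic (f i) : ℝ) - harmonic (g i)) l (𝓝 (log c)) := by
  have hlim := ((tendsto_harmonic_sub_log.comp hf).sub (tendsto_harmonic_sub_log.comp hg)).add
    (hfg.log hc.ne')
  rw [sub_self, zero_add] at hlim
  refine hlim.congr' ?_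
  filter_upwards [hf.eventually_ne_atTop 0, hg.eventually_ne_atTop 0] with i hfi hgi
  rw [Function.comp_apply, Function.comp_apply,
    log_div (Nat.cast_ne_zero.2 hfi) (Nat.cast_ne_zero.2 hgi)]
  ring

theorem logLogisticCDF_nonneg (α x : ℝ) : 0 ≤ logLogisticCDF α x := by
  unfold logLogisticCDF
  split_ifs with hx
  · have := rpow_pos_of_pos hx (-α)
    positivity
  · rfl

theorem strictMonoOn_logLogisticCDF {α : ℝ} (hα : 0 < α) :
    StrictMonoOn (logLogisticCDF α) (Set.Ioi 0) := by
  intro a ha b hb hab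
  simp only [logLogisticCDF, if_pos (show 0 < a from ha), if_pos (show 0 < b from hb)]
  have := rpow_pos_of_pos (show 0 < b from hb) (-α)
  exact one_div_lt_one_div_of_lt (by positivity)
    (add_lt_add_right (rpow_lt_rpow_of_neg ha hab (neg_lt_zero.2 hα)) 1)

theorem logLogisticCDF_rpow_inv {α r : ℝ} (hα : 0 < α) (hr : 0 < r) :
    logLogisticCDF α (r ^ α⁻¹) = r / (1 + r) := by
  rw [logLogisticCDF, if_pos (rpow_pos_of_pos hr _), ← rpow_mul hr.le,
    show α⁻¹ * -α = -1 by field_simp, rpow_neg_one]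
  field_simp
  ring

theorem logLogisticCDF_of_nonpos (α : ℝ) {x : ℝ} (hx : x ≤ 0) : logLogisticCDF α x = 0 :=
  if_neg hx.not_gt

theorem logLogisticCDF_lt_iff {α r t : ℝ} (hα : 0 < α) (hr : 0 < r) :
    logLogisticCDF α t < r / (1 + r) ↔ t < r ^ α⁻¹ := by
  rcases le_or_gt t 0 with ht | ht
  · rw [logLogisticCDF_of_nonpos α ht]
    exact iff_of_true (by positivity) (ht.trans_lt (rpow_pos_of_pos hr _))
  · rw [← logLogisticCDF_rpow_inv hα hr]
    exact (strictMonoOn_logLogisticCDF hα).lt_iff_lt ht (rpow_pos_of_pos hr _)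

theorem logLogisticCDF_le_iff {α r t : ℝ} (hα : 0 < α) (hr : 0 < r) :
    logLogisticCDF α t ≤ r / (1 + r) ↔ t ≤ r ^ α⁻¹ := by
  rcases le_or_gt t 0 with ht | ht
  · rw [logLogisticCDF_of_nonpos α ht]
    exact iff_of_true (by positivity) (ht.trans (rpow_pos_of_pos hr _).le)
  · rw [← logLogisticCDF_rpow_inv hα hr]
    exact (strictMonoOn_logLogisticCDF hα).le_iff_le ht (rpow_pos_of_pos hr _)

theorem tendsto_orderStat_logLogistic {α r : ℝ} (hα : 0 < α) (hr : 0 < r) {x : ℕ → ℝ}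
    (hemp : ∀ t : ℚ, Tendsto (fun m : ℕ => (#{j ∈ range m | x j ≤ t} : ℝ) / m) atTop
      (𝓝 (logLogisticCDF α t)))
    {k n : ℕ → ℕ} (hk : ∀ᶠ i in atTop, 1 ≤ k i ∧ k i ≤ n i) (hn : Tendsto n atTop atTop)
    (hkn : Tendsto (fun i => (k i : ℝ) / n i) atTop (𝓝 (r / (1 + r)))) :
    Tendsto (fun i => orderStat (n i) (fun j => x j) (k i)) atTop (𝓝 (r ^ α⁻¹)) :=
  tendsto_orderStat_of_tendsto_empirical (fun _ ht => (logLogisticCDF_lt_iff hα hr).2 ht)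
    (fun _ ht => not_le.1 fun h => ht.not_ge ((logLogisticCDF_le_iff hα hr).1 h)) hk hn hkn hemp

theorem tendsto_log_orderStat_div_orderStat {α : ℝ} (hα : 0 < α) {s : ℕ} (hs : 0 < s)
    {x : ℕ → ℝ}
    (hemp : ∀ t : ℚ, Tendsto (fun m : ℕ => (#{j ∈ range m | x j ≤ t} : ℝ) / m) atTop
      (𝓝 (logLogisticCDF α t))) :
    Tendsto (fun i : ℕ => log (orderStat (i * (s + 1) - 1) (fun j => x j) (i * s) /
      orderStat (i * (s + 1) - 1) (fun j => x j) i)) atTop (𝓝 (2 * log s / α)) := by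
  have hn : Tendsto (fun i : ℕ => i * (s + 1) - 1) atTop atTop :=
    tendsto_mul_sub_atTop_nat s.succ_pos 1
  have hk : ∀ᶠ i : ℕ in atTop, (1 ≤ i * s ∧ i * s ≤ i * (s + 1) - 1) ∧
      (1 ≤ i ∧ i ≤ i * (s + 1) - 1) := by
    filter_upwards [eventually_ge_atTop 1] with i hi
    have : 1 ≤ i * s := Nat.one_le_iff_ne_zero.2 (by positivity)
    rw [Nat.mul_succ]
    omega
  have hs' : (0 : ℝ) < s := by exact_mod_cast hs
  have hupper := tendsto_orderStat_logLogistic hα hs' hemp (hk.mono fun _ h => h.1) hn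
    (by simpa [add_comm] using tendsto_natCast_mul_sub_div_mul_sub hs s.succ_pos 0 1)
  have hlower := tendsto_orderStat_logLogistic hα (inv_pos.2 hs') hemp
    (hk.mono fun _ h => h.2) hn
    (by
      convert tendsto_natCast_mul_sub_div_mul_sub one_pos s.succ_pos 0 1 using 2
      · simp
      · field_simp; push_cast; ring)
  have hpos : ∀ r : ℝ, 0 < r → r ^ α⁻¹ ≠ 0 := fun r hr => (rpow_pos_of_pos hr _).ne'
  have hlimit : log ((s : ℝ) ^ α⁻¹ / (s : ℝ)⁻¹ ^ α⁻¹) = 2 * log s / α := by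
    rw [log_div (hpos _ hs') (hpos _ (inv_pos.2 hs')), log_rpow hs', log_rpow (inv_pos.2 hs'),
      log_inv]
    ring
  rw [← hlimit]
  exact (hupper.div hlower (hpos _ (inv_pos.2 hs'))).log
    (div_ne_zero (hpos _ hs') (hpos _ (inv_pos.2 hs')))

/-- For fixed `s ≥ 2`, `p ∈ (0,1)` and an i.i.d. sequence from the
Log-Logistic(α;0,1) distribution, the quantile estimators
`(p/(1-p))^{Q_{i,s}^{LL}}`, computed from the first `n = i(s+1)-1` observations,
converge almost surely to the theoretical quantile `(p/(1-p))^{1/α}` as `i → ∞`. -/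
theorem stmt6 {Ω : Type*} [MeasurableSpace Ω] (μ : Measure Ω) [IsProbabilityMeasure μ]
    (s : ℕ) (hs : 2 ≤ s) (p : ℝ) (hp : p ∈ Set.Ioo (0 : ℝ) 1)
    (α : ℝ) (hα : 0 < α)
    (X : ℕ → Ω → ℝ) (hmeas : ∀ k, Measurable (X k))
    (hindep : iIndepFun X μ)
    (hdist : ∀ k x, μ {ω | X k ω ≤ x} = ENNReal.ofReal (logLogisticCDF α x)) :
    ∀ᵐ ω ∂μ, Tendsto (fun i : ℕ =>
        (p / (1 - p)) ^ ((1 / 2) * Real.log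
          (orderStat (i * (s + 1) - 1) (fun j => X j ω) (i * s) /
            orderStat (i * (s + 1) - 1) (fun j => X j ω) i) /
          ((harmonic (i * s - 1) : ℝ) - (harmonic (i - 1) : ℝ))))
      atTop (nhds ((p / (1 - p)) ^ (1 / α))) := by
  have hident : ∀ k, IdentDistrib (X k) (X 0) μ μ := fun k =>
    identDistrib_of_measure_le_eq (hmeas k) (hmeas 0) fun x => by rw [hdist, hdist]
  have hcdf : ∀ t : ℝ, μ.real {ω | X 0 ω ≤ t} = logLogisticCDF α t := fun t => by
    rw [measureReal_def, hdist, ENNReal.toReal_ofReal (logLogisticCDF_nonneg α t)]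
  have hs0 : 0 < s := by omega
  have hharm : Tendsto (fun i : ℕ => (harmonic (i * s - 1) : ℝ) - harmonic (i - 1)) atTop
      (𝓝 (log s)) := by
    simpa using tendsto_harmonic_sub_harmonic (tendsto_mul_sub_atTop_nat hs0 1)
      (tendsto_mul_sub_atTop_nat one_pos 1) (by positivity)
      (tendsto_natCast_mul_sub_div_mul_sub hs0 one_pos 1 1)
  have hlogs : log s ≠ 0 := (log_pos (by exact_mod_cast hs)).ne'
  filter_upwards [ae_tendsto_card_filter_le_div (hmeas 0) (fun i j hij => hindep.indepFun hij)
    hident] with ω hω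
  simp only [hcdf] at hω
  have hexp := ((tendsto_log_orderStat_div_orderStat hα hs0 hω).const_mul (1 / 2)).div hharm hlogs
  rw [show 1 / 2 * (2 * log s / α) / log s = 1 / α by field_simp] at hexp
  exact (continuousAt_const_rpow (div_pos hp.1 (sub_pos.2 hp.2)).ne').tendsto.comp hexp
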